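/- If (γ₁ₙ) and (γ₂ₙ) are Hamburger moment sequences such that the sum sequence (γ₁ₙ + γ₂ₙ) is H-determinate, then both (γ₁ₙ) and (γ₂ₙ) are H-determinate. -/

import Mathlib

open MeasureTheory Set
open scoped ENNReal NNReal

noncomputable section

/-- `ν` has finite moments of all orders. -/
def HasMoments (ν : Measure ℝ) : Prop :=
  ∀ n : ℕ, Integrable (fun t => |t| ^ n) ν

/-- `ν` is a representing measure (on `ℝ`) of the sequence `γ`. -/
def IsRep (γ : ℕ → ℝ) (ν : Measure ℝ) : Prop :=
  HasMoments ν ∧ ∀ n : ℕ, γ n = ∫ t, t ^ n ∂ν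

/-- `γ` is a Hamburger moment sequence. -/
def IsHamburger (γ : ℕ → ℝ) : Prop := ∃ ν : Measure ℝ, IsRep γ ν

/-- `γ` has at most one representing measure on `ℝ` (H-determinacy). -/
def HDet (γ : ℕ → ℝ) : Prop :=
  ∀ ν₁ ν₂ : Measure ℝ, IsRep γ ν₁ → IsRep γ ν₂ → ν₁ = ν₂

/-- `γ` has at least two representing measures on `ℝ` (H-indeterminacy). -/
def HIndet (γ : ℕ → ℝ) : Prop :=
  ∃ ν₁ ν₂ : Measure ℝ, IsRep γ ν₁ ∧ IsRep γ ν₂ ∧ ν₁ ≠ ν₂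

/-- `ν` is a representing measure of `γ` supported on `[0,∞)`. -/
def IsSRep (γ : ℕ → ℝ) (ν : Measure ℝ) : Prop :=
  IsRep γ ν ∧ ν (Set.Iio 0) = 0

/-- `γ` is a Stieltjes moment sequence. -/
def IsStieltjes (γ : ℕ → ℝ) : Prop := ∃ ν : Measure ℝ, IsSRep γ ν

/-- `γ` has at most one representing measure supported on `[0,∞)` (S-determinacy). -/
def SDet (γ : ℕ → ℝ) : Prop :=
  ∀ ν₁ ν₂ : Measure ℝ, IsSRep γ ν₁ → IsSRep γ ν₂ → ν₁ = ν₂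

/-- `γ` has at least two representing measures supported on `[0,∞)`. -/
def SIndet (γ : ℕ → ℝ) : Prop :=
  ∃ ν₁ ν₂ : Measure ℝ, IsSRep γ ν₁ ∧ IsSRep γ ν₂ ∧ ν₁ ≠ ν₂

/-- closed support of a Borel measure on `ℝ`. -/
def msupp (ν : Measure ℝ) : Set ℝ := {x | ∀ U ∈ nhds x, 0 < ν U}

/-- polynomials are dense in `L²(ν)`. -/
def PolyDenseL2 (ν : Measure ℝ) : Prop :=
  ∀ f : ℝ → ℝ, MemLp f 2 ν → ∀ ε : ℝ, 0 < ε →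
    ∃ p : Polynomial ℝ, ∫ t, (f t - p.eval t) ^ 2 ∂ν < ε

/-- `ν` is an N-extremal measure of the Hamburger moment sequence `γ`. -/
def NExt (γ : ℕ → ℝ) (ν : Measure ℝ) : Prop :=
  IsRep γ ν ∧ HIndet γ ∧ PolyDenseL2 ν

/-- `β` is the Friedrichs measure of `γ`: the N-extremal measure supported on `[0,∞)`
maximizing the infimum of the support. -/
def IsFriedrichs (γ : ℕ → ℝ) (β : Measure ℝ) : Prop :=
  NExt γ β ∧ β (Set.Iio 0) = 0 ∧
  ∀ ρ : Measure ℝ, NExt γ ρ → ρ (Set.Iio 0) = 0 → ρ ≠ β →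
    sInf (msupp ρ) < sInf (msupp β)

/-- the transformation `T_{ϑ,a}` on real sequences. -/
def Tmap (ϑ a : ℝ) (γ : ℕ → ℝ) : ℕ → ℝ :=
  fun n => ∑ j ∈ Finset.range (n + 1), (n.choose j : ℝ) * a ^ (n - j) * ϑ ^ n * γ j

/-- a measure is H-determinate: it has all moments and is the unique representing
measure of its own moment sequence. -/
def HDetM (ν : Measure ℝ) : Prop :=
  HasMoments ν ∧ ∀ μ : Measure ℝ, IsRep (fun n => ∫ t, t ^ n ∂ν) μ → μ = ν

/-- the Carleman condition for a sequence (indices from 1), with `1/0 = ∞`. -/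
def Carleman (γ : ℕ → ℝ) : Prop :=
  ∑' n : ℕ, (ENNReal.ofReal (γ (n + 1) ^ (1 / (2 * ((n : ℝ) + 1)))))⁻¹ = ⊤

/-! If `μ, μ'` represent `γ₁` and `ν₂` represents `γ₂`, then `μ + ν₂` and `μ' + ν₂` both represent
`γ₁ + γ₂`, so they coincide by determinacy; since `ν₂` is finite (its moment of order `0`),
it cancels and `μ = μ'`. -/

theorem MeasureTheory.Measure.add_right_cancel_of_isFiniteMeasure {α : Type*}
    [MeasurableSpace α] {μ μ' ν : Measure α} [IsFiniteMeasure ν] (h : μ + ν = μ' + ν) :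
    μ = μ' := by
  ext s -
  simpa only [Measure.add_apply, ENNReal.add_left_inj (measure_ne_top ν s)] using
    congrArg (· s) h

namespace HasMoments

variable {ν : Measure ℝ}

theorem integrable_pow (h : HasMoments ν) (n : ℕ) : Integrable (fun t : ℝ => t ^ n) ν :=
  (h n).mono' (by fun_prop) (.of_forall fun t => by simp)

theorem isFiniteMeasure (h : HasMoments ν) : IsFiniteMeasure ν := by
  simpa [integrable_const_iff] using h 0

end HasMoments

theorem IsRep.add {γ₁ γ₂ : ℕ → ℝ} {ν₁ ν₂ : Measure ℝ} (h₁ : IsRep γ₁ ν₁) (h₂ : IsRep γ₂ ν₂) :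
    IsRep (fun n => γ₁ n + γ₂ n) (ν₁ + ν₂) := by
  refine ⟨fun n => (h₁.1 n).add_measure (h₂.1 n), fun n => ?_⟩
  rw [integral_add_measure (h₁.1.integrable_pow n) (h₂.1.integrable_pow n), ← h₁.2 n, ← h₂.2 n]

theorem HDet.of_add_right {γ₁ γ₂ : ℕ → ℝ} {ν₂ : Measure ℝ} (hdet : HDet (fun n => γ₁ n + γ₂ n))
    (h₂ : IsRep γ₂ ν₂) : HDet γ₁ := fun _ _ hμ hμ' =>
  haveI := h₂.1.isFiniteMeasure
  Measure.add_right_cancel_of_isFiniteMeasure (hdet _ _ (hμ.add h₂) (hμ'.add h₂))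

theorem stmt_1 (γ₁ γ₂ : ℕ → ℝ) (h₁ : IsHamburger γ₁) (h₂ : IsHamburger γ₂)
    (hdet : HDet (fun n => γ₁ n + γ₂ n)) : HDet γ₁ ∧ HDet γ₂ := by
  obtain ⟨ν₁, hν₁⟩ := h₁
  obtain ⟨ν₂, hν₂⟩ := h₂
  have hdet' : HDet (fun n => γ₂ n + γ₁ n) := by simpa only [add_comm] using hdet
  exact ⟨hdet.of_add_right hν₂, hdet'.of_add_right hν₁⟩
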